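/- Let (u, v, p) be a smooth solution on [0,T] × S, S = ℝ × (0,1), of the hydrostatic α-system: ∂_t ω + u ∂_x ω + v ∂_z ω + α²(∂_z u ∂_x∂_z u − ∂_z²u ∂_x u) = ∂_z²ω − ∂_x p, with ω = u − α² ∂_z² u, ∂_z p = 0, ∂_x u + ∂_z v = 0, and u = v = ∂_z u = 0 at z = 0 and z = 1, with all fields decaying in x. Then the energy identity (1/2)(d/dt)(‖u‖²_{L²} + α² ‖∂_z u‖²_{L²}) + ‖∂_z u‖²_{L²} + α² ‖∂_z² u‖²_{L²} = 0 holds. -/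

import Mathlib

open MeasureTheory Set

abbrev E3 := ℝ × ℝ × ℝ

/-- directional partial derivative operator -/
noncomputable def pd (e : E3) (F : E3 → ℝ) : E3 → ℝ := fun w => fderiv ℝ F w e

theorem pd_contDiff {F : E3 → ℝ} (hF : ContDiff ℝ (⊤ : ℕ∞) F) (e : E3) :
    ContDiff ℝ (⊤ : ℕ∞) (pd e F) := by
  exact (hF.fderiv_right (by simp)).clm_apply contDiff_const

theorem pd_comm {F : E3 → ℝ} (hF : ContDiff ℝ (⊤ : ℕ∞) F) (a b : E3) :
    pd a (pd b F) = pd b (pd a F) := by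
  funext w
  have hdF : Differentiable ℝ F := hF.differentiable (by simp)
  have hdfF : DifferentiableAt ℝ (fderiv ℝ F) w :=
    ((hF.fderiv_right (m := (⊤ : ℕ∞)) (by simp)).differentiable (by simp)) w
  have key : ∀ c : E3, fderiv ℝ (fun y => fderiv ℝ F y c) w =
      (fderiv ℝ (fderiv ℝ F) w).flip c := by
    intro c
    rw [fderiv_clm_apply hdfF (differentiableAt_const c)]
    simp
  have symm := second_derivative_symmetric (f := F) (f' := fderiv ℝ F)
    (f'' := fderiv ℝ (fderiv ℝ F) w) (fun y => (hdF y).hasFDerivAt)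
    hdfF.hasFDerivAt
  show fderiv ℝ (fun y => fderiv ℝ F y b) w a = fderiv ℝ (fun y => fderiv ℝ F y a) w b
  rw [key b, key a]
  simpa using symm a b

noncomputable def e1 : E3 := (1,0,0)
noncomputable def e2 : E3 := (0,1,0)
noncomputable def e3 : E3 := (0,0,1)

theorem hasDerivAt_slice1 {F : E3 → ℝ} (hF : Differentiable ℝ F) (t x z : ℝ) :
    HasDerivAt (fun t' => F (t', x, z)) (pd e1 F (t,x,z)) t := by
  have h1 : HasDerivAt (fun t' : ℝ => ((t',x,z) : E3)) (1,0,0) t :=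
    (hasDerivAt_id t).prodMk ((hasDerivAt_const t x).prodMk (hasDerivAt_const t z))
  simpa [pd, e1, Function.comp_def] using ((hF (t,x,z)).hasFDerivAt.comp_hasDerivAt t h1)

theorem hasDerivAt_slice2 {F : E3 → ℝ} (hF : Differentiable ℝ F) (t x z : ℝ) :
    HasDerivAt (fun x' => F (t, x', z)) (pd e2 F (t,x,z)) x := by
  have h1 : HasDerivAt (fun x' : ℝ => ((t,x',z) : E3)) (0,1,0) x :=
    (hasDerivAt_const x t).prodMk ((hasDerivAt_id x).prodMk (hasDerivAt_const x z))
  simpa [pd, e2, Function.comp_def] using ((hF (t,x,z)).hasFDerivAt.comp_hasDerivAt x h1)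

theorem hasDerivAt_slice3 {F : E3 → ℝ} (hF : Differentiable ℝ F) (t x z : ℝ) :
    HasDerivAt (fun z' => F (t, x, z')) (pd e3 F (t,x,z)) z := by
  have h1 : HasDerivAt (fun z' : ℝ => ((t,x,z') : E3)) (0,0,1) z :=
    (hasDerivAt_const z t).prodMk ((hasDerivAt_const z x).prodMk (hasDerivAt_id z))
  simpa [pd, e3, Function.comp_def] using ((hF (t,x,z)).hasFDerivAt.comp_hasDerivAt z h1)

theorem deriv_slice1 {F : E3 → ℝ} (hF : Differentiable ℝ F) (t x z : ℝ) :
    deriv (fun t' => F (t', x, z)) t = pd e1 F (t,x,z) := (hasDerivAt_slice1 hF t x z).deriv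

theorem deriv_slice2 {F : E3 → ℝ} (hF : Differentiable ℝ F) (t x z : ℝ) :
    deriv (fun x' => F (t, x', z)) x = pd e2 F (t,x,z) := (hasDerivAt_slice2 hF t x z).deriv

theorem deriv_slice3 {F : E3 → ℝ} (hF : Differentiable ℝ F) (t x z : ℝ) :
    deriv (fun z' => F (t, x, z')) z = pd e3 F (t,x,z) := (hasDerivAt_slice3 hF t x z).deriv

theorem pd_mul {F G : E3 → ℝ} (e : E3) {w : E3} (hF : DifferentiableAt ℝ F w)
    (hG : DifferentiableAt ℝ G w) :
    pd e (fun y => F y * G y) w = pd e F w * G w + F w * pd e G w := by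
  simp [pd, fderiv_fun_mul hF hG]; ring

theorem pd_add {F G : E3 → ℝ} (e : E3) {w : E3} (hF : DifferentiableAt ℝ F w)
    (hG : DifferentiableAt ℝ G w) :
    pd e (fun y => F y + G y) w = pd e F w + pd e G w := by
  simp [pd, fderiv_fun_add hF hG]

theorem pd_sub {F G : E3 → ℝ} (e : E3) {w : E3} (hF : DifferentiableAt ℝ F w)
    (hG : DifferentiableAt ℝ G w) :
    pd e (fun y => F y - G y) w = pd e F w - pd e G w := by
  simp [pd, fderiv_fun_sub hF hG]

theorem pd_const_mul {F : E3 → ℝ} (e : E3) {w : E3} (c : ℝ) (hF : DifferentiableAt ℝ F w) :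
    pd e (fun y => c * F y) w = c * pd e F w := by
  simp [pd, fderiv_const_mul hF c]

theorem pd_const (e : E3) (c : ℝ) : pd e (fun _ => c) = fun _ => 0 := by
  funext w; simp [pd]

theorem pd_sub' {F G : E3 → ℝ} (e : E3) (hF : Differentiable ℝ F)
    (hG : Differentiable ℝ G) :
    pd e (fun y => F y - G y) = fun w => pd e F w - pd e G w := by
  funext w; exact pd_sub e (hF w) (hG w)

theorem pd_add' {F G : E3 → ℝ} (e : E3) (hF : Differentiable ℝ F)
    (hG : Differentiable ℝ G) :
    pd e (fun y => F y + G y) = fun w => pd e F w + pd e G w := by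
  funext w; exact pd_add e (hF w) (hG w)

theorem pd_mul' {F G : E3 → ℝ} (e : E3) (hF : Differentiable ℝ F)
    (hG : Differentiable ℝ G) :
    pd e (fun y => F y * G y) = fun w => pd e F w * G w + F w * pd e G w := by
  funext w; exact pd_mul e (hF w) (hG w)

theorem pd_const_mul' {F : E3 → ℝ} (e : E3) (c : ℝ) (hF : Differentiable ℝ F) :
    pd e (fun y => c * F y) = fun w => c * pd e F w := by
  funext w; exact pd_const_mul e c (hF w)

noncomputable def UU (u : ℝ → ℝ → ℝ → ℝ) : E3 → ℝ := fun w => u w.1 w.2.1 w.2.2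

noncomputable def Om (α : ℝ) (u : ℝ → ℝ → ℝ → ℝ) : E3 → ℝ :=
  fun w => UU u w - α ^ 2 * pd e3 (pd e3 (UU u)) w

noncomputable def AA (α : ℝ) (u p : ℝ → ℝ → ℝ → ℝ) : E3 → ℝ := fun w =>
  (1/2) * (UU u w * (UU u w * UU u w)) - UU u w * (UU u w * Om α u w)
  - α ^ 2 / 2 * (UU u w * (pd e3 (UU u) w * pd e3 (UU u) w)) - UU u w * UU p w

noncomputable def BB (α : ℝ) (u v p : ℝ → ℝ → ℝ → ℝ) : E3 → ℝ := fun w =>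
  α ^ 2 * (UU u w * pd e3 (pd e1 (UU u)) w) - UU u w * (UU v w * Om α u w)
  + 1/2 * (UU u w * (UU u w * UU v w))
  - α ^ 2 / 2 * (UU v w * (pd e3 (UU u) w * pd e3 (UU u) w))
  + UU u w * pd e3 (UU u) w - α ^ 2 * (UU u w * pd e3 (pd e3 (pd e3 (UU u))) w)
  + α ^ 2 * (pd e3 (UU u) w * pd e3 (pd e3 (UU u)) w) - UU v w * UU p w

theorem key_pointwise (α : ℝ) (u v p : ℝ → ℝ → ℝ → ℝ)
    (hu : ContDiff ℝ (⊤ : ℕ∞) (UU u)) (hv : ContDiff ℝ (⊤ : ℕ∞) (UU v)) (hp : ContDiff ℝ (⊤ : ℕ∞) (UU p))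
    (w : E3)
    (hdivw : pd e2 (UU u) w + pd e3 (UU v) w = 0)
    (hpzw : pd e3 (UU p) w = 0)
    (hPDEw : pd e1 (Om α u) w + UU u w * pd e2 (Om α u) w + UU v w * pd e3 (Om α u) w
      + α ^ 2 * (pd e3 (UU u) w * pd e2 (pd e3 (UU u)) w
        - pd e3 (pd e3 (UU u)) w * pd e2 (UU u) w)
      = pd e3 (pd e3 (Om α u)) w - pd e2 (UU p) w) :
    UU u w * pd e1 (UU u) w + α ^ 2 * (pd e3 (UU u) w * pd e3 (pd e1 (UU u)) w)
      = -((pd e3 (UU u) w) ^ 2 + α ^ 2 * (pd e3 (pd e3 (UU u)) w) ^ 2)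
        + pd e2 (AA α u p) w + pd e3 (BB α u v p) w := by
  have du : Differentiable ℝ (UU u) := hu.differentiable (by simp)
  have dv : Differentiable ℝ (UU v) := hv.differentiable (by simp)
  have dp : Differentiable ℝ (UU p) := hp.differentiable (by simp)
  have duz : Differentiable ℝ (pd e3 (UU u)) := (pd_contDiff hu e3).differentiable (by simp)
  have duzz : Differentiable ℝ (pd e3 (pd e3 (UU u))) :=
    (pd_contDiff (pd_contDiff hu e3) e3).differentiable (by simp)
  have duzzz : Differentiable ℝ (pd e3 (pd e3 (pd e3 (UU u)))) :=
    (pd_contDiff (pd_contDiff (pd_contDiff hu e3) e3) e3).differentiable (by simp)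
  have dut : Differentiable ℝ (pd e1 (UU u)) := (pd_contDiff hu e1).differentiable (by simp)
  have duzt : Differentiable ℝ (pd e3 (pd e1 (UU u))) :=
    (pd_contDiff (pd_contDiff hu e1) e3).differentiable (by simp)
  delta AA BB Om at hPDEw ⊢
  simp (disch := fun_prop) only [pd_sub', pd_add', pd_mul', pd_const_mul', pd_const]
    at hPDEw ⊢
  rw [pd_comm (pd_contDiff hu e3) e1 e3, pd_comm hu e1 e3] at hPDEw
  linear_combination (UU u w) * hPDEw
    + ((UU u w) ^ 2 / 2 - α ^ 2 * UU u w * pd e3 (pd e3 (UU u)) w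
        + α ^ 2 * (pd e3 (UU u) w) ^ 2 / 2 + UU p w) * hdivw
    + (UU v w) * hpzw

theorem pd_zero_slab {F : E3 → ℝ} {R : ℝ}
    (h : ∀ t x z : ℝ, R ≤ |x| → F (t, x, z) = 0) (e : E3) :
    ∀ t x z : ℝ, R + 1 ≤ |x| → pd e F (t, x, z) = 0 := by
  intro t x z hx
  have hopen : IsOpen {w : E3 | R < |w.2.1|} := by
    have : Continuous fun w : E3 => |w.2.1| := (continuous_fst.comp continuous_snd).abs
    exact isOpen_lt continuous_const this
  have hmem : ((t, x, z) : E3) ∈ {w : E3 | R < |w.2.1|} := by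
    simp only [mem_setOf_eq]; linarith
  have hev : F =ᶠ[nhds ((t, x, z) : E3)] fun _ => (0 : ℝ) := by
    filter_upwards [hopen.mem_nhds hmem] with w hw
    exact h w.1 w.2.1 w.2.2 (le_of_lt hw)
  have : fderiv ℝ F (t, x, z) = fderiv ℝ (fun _ : E3 => (0:ℝ)) (t, x, z) :=
    Filter.EventuallyEq.fderiv_eq hev
  simp [pd, this]

noncomputable def rho : Measure (ℝ × ℝ) :=
  (volume : Measure ℝ).prod ((volume : Measure ℝ).restrict (Ioo 0 1))

theorem rho_compl_null : rho (univ ×ˢ (Ioo (0:ℝ) 1)ᶜ) = 0 := by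
  rw [rho, Measure.prod_prod]
  have : (volume : Measure ℝ).restrict (Ioo 0 1) (Ioo (0:ℝ) 1)ᶜ = 0 := by
    rw [Measure.restrict_apply (measurableSet_Ioo.compl)]
    simp
  rw [this, mul_zero]

theorem rho_box_lt_top (R : ℝ) : rho (Icc (-R) R ×ˢ Icc (0:ℝ) 1) < ⊤ := by
  rw [rho, Measure.prod_prod]
  have h1 : (volume : Measure ℝ) (Icc (-R) R) < ⊤ := by
    rw [Real.volume_Icc]; exact ENNReal.ofReal_lt_top
  have h2 : (volume : Measure ℝ).restrict (Ioo 0 1) (Icc (0:ℝ) 1) < ⊤ := by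
    rw [Measure.restrict_apply measurableSet_Icc]
    calc (volume : Measure ℝ) (Icc (0:ℝ) 1 ∩ Ioo 0 1) ≤ volume (Icc (0:ℝ) 1) :=
          measure_mono inter_subset_left
      _ < ⊤ := by rw [Real.volume_Icc]; exact ENNReal.ofReal_lt_top
  exact ENNReal.mul_lt_top h1 h2

/-- integrability of a continuous function vanishing for `R ≤ |x|` -/
theorem integrable_slab {f : ℝ × ℝ → ℝ} (hf : Continuous f) {R : ℝ}
    (h0 : ∀ q : ℝ × ℝ, R ≤ |q.1| → f q = 0) : Integrable f rho := by
  obtain ⟨C, hC⟩ := (isCompact_Icc.prod (isCompact_Icc (a := (0:ℝ)) (b := 1))).exists_bound_of_continuousOn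
    (f := f) hf.continuousOn
  set C' := max C 0 with hC'
  set s : Set (ℝ × ℝ) := Icc (-R) R ×ˢ Icc (0:ℝ) 1 with hs
  have hmeas : MeasurableSet s := (measurableSet_Icc.prod measurableSet_Icc)
  have hgint : Integrable (s.indicator fun _ => C') rho := by
    rw [integrable_indicator_iff hmeas]
    exact integrableOn_const (rho_box_lt_top R).ne
  refine Integrable.mono' hgint hf.aestronglyMeasurable ?_
  have hnull : rho {q : ℝ × ℝ | q.2 ∉ Ioo (0:ℝ) 1} = 0 := by
    apply measure_mono_null _ rho_compl_null
    intro q hq; exact ⟨trivial, hq⟩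
  filter_upwards [MeasureTheory.measure_eq_zero_iff_ae_notMem.mp hnull] with q hq
  have hq2 : q.2 ∈ Ioo (0:ℝ) 1 := by simpa using hq
  by_cases hx : R ≤ |q.1|
  · rw [h0 q hx]
    simp only [norm_zero]
    exact Set.indicator_apply_nonneg (fun _ => le_max_right _ _)
  · push_neg at hx
    have hqs : q ∈ s := by
      constructor
      · constructor <;> [linarith [neg_abs_le q.1]; linarith [le_abs_self q.1]]
      · exact ⟨hq2.1.le, hq2.2.le⟩
    rw [Set.indicator_of_mem hqs]
    exact le_trans (hC q ⟨⟨by linarith [neg_abs_le q.1], by linarith [le_abs_self q.1]⟩, hq2.1.le, hq2.2.le⟩) (le_max_left _ _)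

set_option maxHeartbeats 1000000 in
theorem hasDerivAt_int {F : E3 → ℝ} (hF : ContDiff ℝ (⊤ : ℕ∞) F) {R : ℝ}
    (h0 : ∀ t x z : ℝ, R ≤ |x| → F (t, x, z) = 0) (t : ℝ) :
    HasDerivAt (fun τ => ∫ q, F (τ, q.1, q.2) ∂rho)
      (∫ q, pd e1 F (t, q.1, q.2) ∂rho) t := by
  have hFc : Continuous F := hF.continuous
  have hF'c : Continuous (pd e1 F) := (pd_contDiff hF e1).continuous
  have h0' : ∀ t x z : ℝ, R + 1 ≤ |x| → pd e1 F (t, x, z) = 0 := pd_zero_slab h0 e1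
  have hcomp : ∀ τ : ℝ, Continuous fun q : ℝ × ℝ => ((τ, q.1, q.2) : E3) :=
    fun τ => continuous_const.prodMk (continuous_fst.prodMk continuous_snd)
  set R' := R + 1 with hR'
  obtain ⟨C, hC⟩ := (isCompact_Icc (a := t - 1) (b := t + 1)).prod
    ((isCompact_Icc (a := -R') (b := R')).prod
      (isCompact_Icc (a := (0:ℝ)) (b := 1)))
    |>.exists_bound_of_continuousOn (f := pd e1 F) hF'c.continuousOn
  set C' := max C 0 with hC'def
  set s : Set (ℝ × ℝ) := Icc (-R') R' ×ˢ Icc (0:ℝ) 1 with hs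
  have hmeas : MeasurableSet s := measurableSet_Icc.prod measurableSet_Icc
  have hnull : rho {q : ℝ × ℝ | q.2 ∉ Ioo (0:ℝ) 1} = 0 := by
    apply measure_mono_null _ rho_compl_null
    intro q hq; exact ⟨trivial, hq⟩
  have hbound : ∀ᵐ q ∂rho, ∀ τ ∈ Metric.ball t 1,
      ‖pd e1 F (τ, q.1, q.2)‖ ≤ s.indicator (fun _ => C') q := by
    filter_upwards [MeasureTheory.measure_eq_zero_iff_ae_notMem.mp hnull] with q hq
    intro τ hτ
    have hq2 : q.2 ∈ Ioo (0:ℝ) 1 := by simpa using hq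
    by_cases hx : R' ≤ |q.1|
    · rw [h0' τ q.1 q.2 hx]
      simp only [norm_zero]
      exact Set.indicator_apply_nonneg (fun _ => le_max_right _ _)
    · push_neg at hx
      have hqs : q ∈ s :=
        ⟨⟨by linarith [neg_abs_le q.1], by linarith [le_abs_self q.1]⟩, hq2.1.le, hq2.2.le⟩
      rw [Set.indicator_of_mem hqs]
      refine le_trans (hC (τ, q.1, q.2) ?_) (le_max_left _ _)
      have hτ' : |τ - t| < 1 := by
        have := Metric.mem_ball.mp hτ
        simpa [Real.dist_eq] using this
      exact ⟨⟨by cases abs_lt.mp hτ'; linarith, by cases abs_lt.mp hτ'; linarith⟩,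
        ⟨by linarith [neg_abs_le q.1], by linarith [le_abs_self q.1]⟩, hq2.1.le, hq2.2.le⟩
  have hbint : Integrable (s.indicator fun _ => C') rho := by
    rw [integrable_indicator_iff hmeas]
    exact integrableOn_const (rho_box_lt_top R').ne
  have hdiff : ∀ᵐ q ∂rho, ∀ τ ∈ Metric.ball t 1,
      HasDerivAt (fun τ' => F (τ', q.1, q.2)) (pd e1 F (τ, q.1, q.2)) τ :=
    Filter.Eventually.of_forall fun q τ _ =>
      hasDerivAt_slice1 (hF.differentiable (by simp)) τ q.1 q.2
  exact (hasDerivAt_integral_of_dominated_loc_of_deriv_le (μ := rho)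
    (F := fun τ (q : ℝ × ℝ) => F (τ, q.1, q.2))
    (F' := fun τ (q : ℝ × ℝ) => pd e1 F (τ, q.1, q.2))
    (x₀ := t) (bound := s.indicator fun _ => C') (Metric.ball_mem_nhds t one_pos)
    (Filter.Eventually.of_forall fun τ => (hFc.comp (hcomp τ)).aestronglyMeasurable)
    (integrable_slab (hFc.comp (hcomp t)) (fun q hq => h0 t q.1 q.2 hq))
    ((hF'c.comp (hcomp t)).aestronglyMeasurable)
    hbound hbint hdiff).2

theorem integral_line_zero {g g' : ℝ → ℝ} (hg' : Continuous g')
    (hd : ∀ x, HasDerivAt g (g' x) x) {R : ℝ} (hR : 0 ≤ R)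
    (h0 : ∀ x, R ≤ |x| → g x = 0) : ∫ x : ℝ, g' x = 0 := by
  have hg'0 : ∀ x, R + 1 ≤ |x| → g' x = 0 := by
    intro x hx
    have hopen : IsOpen {y : ℝ | R < |y|} := isOpen_lt continuous_const continuous_abs
    have hev : g =ᶠ[nhds x] fun _ => (0:ℝ) := by
      filter_upwards [hopen.mem_nhds (by simp only [mem_setOf_eq]; linarith)] with y hy
      exact h0 y (le_of_lt hy)
    have : deriv g x = deriv (fun _ => (0:ℝ)) x := Filter.EventuallyEq.deriv_eq hev
    rw [← (hd x).deriv, this, deriv_const]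
  have hzero : ∀ x ∉ Icc (-(R+1)) (R+1), g' x = 0 := by
    intro x hx
    rcases not_and_or.mp hx with h | h
    · push_neg at h; exact hg'0 x (by rw [abs_of_nonpos (by linarith)]; linarith)
    · push_neg at h; exact hg'0 x (by rw [abs_of_nonneg (by linarith)]; linarith)
  rw [← MeasureTheory.setIntegral_eq_integral_of_forall_compl_eq_zero hzero,
    MeasureTheory.integral_Icc_eq_integral_Ioc,
    ← intervalIntegral.integral_of_le (by linarith : -(R+1) ≤ R+1)]
  rw [intervalIntegral.integral_eq_sub_of_hasDerivAt (fun x _ => hd x)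
    (hg'.intervalIntegrable _ _)]
  rw [h0 _ (by rw [abs_of_nonneg (by linarith)]; linarith),
    h0 _ (by rw [abs_neg, abs_of_nonneg (by linarith)]; linarith), sub_zero]

theorem int_pd_e2_zero {F : E3 → ℝ} (hF : ContDiff ℝ (⊤ : ℕ∞) F) {R : ℝ} (hR : 0 ≤ R)
    (h0 : ∀ t x z : ℝ, R ≤ |x| → F (t, x, z) = 0) (t : ℝ) :
    ∫ q, pd e2 F (t, q.1, q.2) ∂rho = 0 := by
  have hcomp : Continuous fun q : ℝ × ℝ => ((t, q.1, q.2) : E3) :=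
    continuous_const.prodMk (continuous_fst.prodMk continuous_snd)
  have hint : Integrable (fun q : ℝ × ℝ => pd e2 F (t, q.1, q.2)) rho :=
    integrable_slab ((pd_contDiff hF e2).continuous.comp hcomp)
      (fun q hq => pd_zero_slab h0 e2 t q.1 q.2 hq)
  have h1 : ∀ z : ℝ, ∫ x : ℝ, pd e2 F (t, x, z) = 0 := by
    intro z
    exact integral_line_zero
      ((pd_contDiff hF e2).continuous.comp
        (continuous_const.prodMk (continuous_id.prodMk continuous_const)))
      (fun x => hasDerivAt_slice2 (hF.differentiable (by simp)) t x z) hR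
      (fun x hx => h0 t x z hx)
  calc ∫ q, pd e2 F (t, q.1, q.2) ∂rho
      = ∫ x : ℝ, ∫ z in Ioo (0:ℝ) 1, pd e2 F (t, x, z) :=
        (MeasureTheory.integral_integral (f := fun x z => pd e2 F (t, x, z))
          (μ := (volume : Measure ℝ)) (ν := (volume : Measure ℝ).restrict (Ioo 0 1))
          hint).symm
    _ = ∫ z in Ioo (0:ℝ) 1, ∫ x : ℝ, pd e2 F (t, x, z) :=
        MeasureTheory.integral_integral_swap (f := fun x z => pd e2 F (t, x, z))
          (μ := (volume : Measure ℝ)) (ν := (volume : Measure ℝ).restrict (Ioo 0 1))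
          hint
    _ = 0 := by
        have : (fun z => ∫ x : ℝ, pd e2 F (t, x, z)) = fun _ => (0:ℝ) := funext h1
        rw [this, integral_zero]

theorem int_pd_e3_zero {F : E3 → ℝ} (hF : ContDiff ℝ (⊤ : ℕ∞) F) {R : ℝ}
    (h0 : ∀ t x z : ℝ, R ≤ |x| → F (t, x, z) = 0) (t : ℝ)
    (hb : ∀ x : ℝ, F (t, x, 0) = 0 ∧ F (t, x, 1) = 0) :
    ∫ q, pd e3 F (t, q.1, q.2) ∂rho = 0 := by
  have hcomp : Continuous fun q : ℝ × ℝ => ((t, q.1, q.2) : E3) :=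
    continuous_const.prodMk (continuous_fst.prodMk continuous_snd)
  have hint : Integrable (fun q : ℝ × ℝ => pd e3 F (t, q.1, q.2)) rho :=
    integrable_slab ((pd_contDiff hF e3).continuous.comp hcomp)
      (fun q hq => pd_zero_slab h0 e3 t q.1 q.2 hq)
  have h1 : ∀ x : ℝ, ∫ z in Ioo (0:ℝ) 1, pd e3 F (t, x, z) = 0 := by
    intro x
    rw [← MeasureTheory.integral_Ioc_eq_integral_Ioo,
      ← intervalIntegral.integral_of_le (by norm_num : (0:ℝ) ≤ 1)]
    rw [intervalIntegral.integral_eq_sub_of_hasDerivAt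
      (fun z _ => hasDerivAt_slice3 (hF.differentiable (by simp)) t x z)
      (((pd_contDiff hF e3).continuous.comp
        (continuous_const.prodMk (continuous_const.prodMk continuous_id))).intervalIntegrable _ _)]
    rw [(hb x).1, (hb x).2, sub_zero]
  calc ∫ q, pd e3 F (t, q.1, q.2) ∂rho
      = ∫ x : ℝ, ∫ z in Ioo (0:ℝ) 1, pd e3 F (t, x, z) :=
        (MeasureTheory.integral_integral (f := fun x z => pd e3 F (t, x, z))
          (μ := (volume : Measure ℝ)) (ν := (volume : Measure ℝ).restrict (Ioo 0 1))
          hint).symm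
    _ = 0 := by
        have : (fun x => ∫ z in Ioo (0:ℝ) 1, pd e3 F (t, x, z)) = fun _ => (0:ℝ) := funext h1
        rw [this, integral_zero]

noncomputable def GG (α : ℝ) (u : ℝ → ℝ → ℝ → ℝ) : E3 → ℝ := fun w =>
  1/2 * (UU u w * UU u w) + α ^ 2 / 2 * (pd e3 (UU u) w * pd e3 (UU u) w)

/-- The quantity `ω = u - α² ∂_z² u`. -/
noncomputable def omegaA (α : ℝ) (u : ℝ → ℝ → ℝ → ℝ) : ℝ → ℝ → ℝ → ℝ :=
  fun t x z => u t x z - α ^ 2 * deriv (deriv (fun z' => u t x z')) z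

/-- Energy identity for smooth solutions of the hydrostatic α-system on
`[0,T] × ℝ × (0,1)`:
`(1/2) d/dt (‖u‖²_{L²} + α²‖∂_z u‖²_{L²}) + ‖∂_z u‖²_{L²} + α²‖∂_z² u‖²_{L²} = 0`. -/
theorem hydrostatic_alpha_energy_identity
    (α T : ℝ) (hα : 0 < α) (hT : 0 < T)
    (u v p : ℝ → ℝ → ℝ → ℝ)
    (hu : ContDiff ℝ (⊤ : ℕ∞) fun w : ℝ × ℝ × ℝ => u w.1 w.2.1 w.2.2)
    (hv : ContDiff ℝ (⊤ : ℕ∞) fun w : ℝ × ℝ × ℝ => v w.1 w.2.1 w.2.2)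
    (hp : ContDiff ℝ (⊤ : ℕ∞) fun w : ℝ × ℝ × ℝ => p w.1 w.2.1 w.2.2)
    -- decay in x (compact support, ensuring all integrations by parts are justified)
    (hdecay : ∃ R : ℝ, ∀ t x z : ℝ, R ≤ |x| →
      u t x z = 0 ∧ v t x z = 0 ∧ p t x z = 0)
    -- hydrostatic pressure: ∂_z p = 0
    (hpz : ∀ t x z : ℝ, deriv (fun z' => p t x z') z = 0)
    -- incompressibility: ∂ₓ u + ∂_z v = 0
    (hdiv : ∀ t x z : ℝ,
      deriv (fun s => u t s z) x + deriv (fun z' => v t x z') z = 0)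
    -- boundary conditions at z = 0, 1
    (hbc : ∀ t x : ℝ,
      u t x 0 = 0 ∧ u t x 1 = 0 ∧ v t x 0 = 0 ∧ v t x 1 = 0 ∧
      deriv (fun z => u t x z) 0 = 0 ∧ deriv (fun z => u t x z) 1 = 0)
    -- the evolution equation for ω = u - α² ∂_z²u
    (hPDE : ∀ t ∈ Set.Ioo (0:ℝ) T, ∀ x : ℝ, ∀ z ∈ Set.Ioo (0:ℝ) 1,
      deriv (fun t' => omegaA α u t' x z) t +
        u t x z * deriv (fun s => omegaA α u t s z) x +
        v t x z * deriv (fun z' => omegaA α u t x z') z +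
        α ^ 2 * (deriv (fun z' => u t x z') z *
            deriv (fun s => deriv (fun z' => u t s z') z) x -
          deriv (deriv (fun z' => u t x z')) z * deriv (fun s => u t s z) x) =
      deriv (deriv (fun z' => omegaA α u t x z')) z - deriv (fun s => p t s z) x) :
    ∀ t ∈ Set.Ioo (0:ℝ) T,
      HasDerivAt
        (fun τ => (1/2) *
          ((∫ x : ℝ, ∫ z in Set.Ioo (0:ℝ) 1, (u τ x z) ^ 2) +
            α ^ 2 * ∫ x : ℝ, ∫ z in Set.Ioo (0:ℝ) 1, (deriv (fun z' => u τ x z') z) ^ 2))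
        (-((∫ x : ℝ, ∫ z in Set.Ioo (0:ℝ) 1, (deriv (fun z' => u t x z') z) ^ 2) +
            α ^ 2 *
              ∫ x : ℝ, ∫ z in Set.Ioo (0:ℝ) 1,
                (deriv (deriv (fun z' => u t x z')) z) ^ 2)) t := by
  intro t ht
  obtain ⟨R₀, hdec⟩ := hdecay
  set R : ℝ := |R₀| + 1 with hR
  have hR0 : 0 ≤ R := by positivity
  have hdecR : ∀ t x z : ℝ, R ≤ |x| → u t x z = 0 ∧ v t x z = 0 ∧ p t x z = 0 :=
    fun t x z hx => hdec t x z (by linarith [abs_nonneg R₀, le_abs_self R₀])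
  have hu' : ContDiff ℝ (⊤ : ℕ∞) (UU u) := hu
  have hv' : ContDiff ℝ (⊤ : ℕ∞) (UU v) := hv
  have hp' : ContDiff ℝ (⊤ : ℕ∞) (UU p) := hp
  have du : Differentiable ℝ (UU u) := hu'.differentiable (by simp)
  have dv : Differentiable ℝ (UU v) := hv'.differentiable (by simp)
  have dp : Differentiable ℝ (UU p) := hp'.differentiable (by simp)
  have cuz : ContDiff ℝ (⊤ : ℕ∞) (pd e3 (UU u)) := pd_contDiff hu' e3
  have cuzz : ContDiff ℝ (⊤ : ℕ∞) (pd e3 (pd e3 (UU u))) := pd_contDiff cuz e3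
  have cuzzz : ContDiff ℝ (⊤ : ℕ∞) (pd e3 (pd e3 (pd e3 (UU u)))) := pd_contDiff cuzz e3
  have cut : ContDiff ℝ (⊤ : ℕ∞) (pd e1 (UU u)) := pd_contDiff hu' e1
  have cuzt : ContDiff ℝ (⊤ : ℕ∞) (pd e3 (pd e1 (UU u))) := pd_contDiff cut e3
  have duz := cuz.differentiable (by simp)
  have duzz := cuzz.differentiable (by simp)
  have duzzz := cuzzz.differentiable (by simp)
  have dut := cut.differentiable (by simp)
  have duzt := cuzt.differentiable (by simp)
  have cOm : ContDiff ℝ (⊤ : ℕ∞) (Om α u) := by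
    delta Om; exact hu'.sub (contDiff_const.mul cuzz)
  have dOm : Differentiable ℝ (Om α u) := cOm.differentiable (by simp)
  have cOmz : ContDiff ℝ (⊤ : ℕ∞) (pd e3 (Om α u)) := pd_contDiff cOm e3
  have dOmz := cOmz.differentiable (by simp)
  -- translations
  have Tz : ∀ t x z : ℝ, deriv (fun z' => u t x z') z = pd e3 (UU u) (t, x, z) :=
    fun t x z => deriv_slice3 du t x z
  have Tzv : ∀ t x z : ℝ, deriv (fun z' => v t x z') z = pd e3 (UU v) (t, x, z) :=
    fun t x z => deriv_slice3 dv t x z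
  have Tzp : ∀ t x z : ℝ, deriv (fun z' => p t x z') z = pd e3 (UU p) (t, x, z) :=
    fun t x z => deriv_slice3 dp t x z
  have Txu : ∀ t x z : ℝ, deriv (fun s => u t s z) x = pd e2 (UU u) (t, x, z) :=
    fun t x z => deriv_slice2 du t x z
  have Txp : ∀ t x z : ℝ, deriv (fun s => p t s z) x = pd e2 (UU p) (t, x, z) :=
    fun t x z => deriv_slice2 dp t x z
  have Tzz : ∀ t x z : ℝ, deriv (deriv (fun z' => u t x z')) z
      = pd e3 (pd e3 (UU u)) (t, x, z) := by
    intro t x z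
    rw [show (deriv fun z' => u t x z') = (fun z' => pd e3 (UU u) (t, x, z')) from
      funext (Tz t x)]
    exact deriv_slice3 duz t x z
  have TOm : ∀ t x z : ℝ, omegaA α u t x z = Om α u (t, x, z) := by
    intro t x z
    unfold omegaA
    rw [Tzz t x z]
    rfl
  -- PDE in pd form
  have hPDEw : ∀ x z : ℝ, z ∈ Ioo (0:ℝ) 1 →
      pd e1 (Om α u) (t,x,z) + UU u (t,x,z) * pd e2 (Om α u) (t,x,z)
      + UU v (t,x,z) * pd e3 (Om α u) (t,x,z)
      + α ^ 2 * (pd e3 (UU u) (t,x,z) * pd e2 (pd e3 (UU u)) (t,x,z)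
        - pd e3 (pd e3 (UU u)) (t,x,z) * pd e2 (UU u) (t,x,z))
      = pd e3 (pd e3 (Om α u)) (t,x,z) - pd e2 (UU p) (t,x,z) := by
    intro x z hz
    have h := hPDE t ht x z hz
    rw [show (fun t' => omegaA α u t' x z) = fun t' => Om α u (t',x,z) from
          funext (fun t' => TOm t' x z),
        show (fun s => omegaA α u t s z) = fun s => Om α u (t,s,z) from
          funext (fun s => TOm t s z),
        show (fun z' => omegaA α u t x z') = fun z' => Om α u (t,x,z') from
          funext (fun z' => TOm t x z'),
        show (fun s => deriv (fun z' => u t s z') z) = fun s => pd e3 (UU u) (t,s,z) from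
          funext (fun s => Tz t s z)] at h
    rw [deriv_slice1 dOm t x z, deriv_slice2 dOm t x z, deriv_slice3 dOm t x z,
        deriv_slice2 duz t x z, Tz t x z, Tzz t x z, Txu t x z, Txp t x z] at h
    rw [show (deriv fun z' => Om α u (t,x,z')) = fun z' => pd e3 (Om α u) (t,x,z') from
          funext (fun z' => deriv_slice3 dOm t x z'),
        deriv_slice3 dOmz t x z] at h
    exact h
  have hdivw : ∀ w : E3, pd e2 (UU u) w + pd e3 (UU v) w = 0 := by
    rintro ⟨t,x,z⟩
    have h := hdiv t x z
    rwa [Txu t x z, Tzv t x z] at h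
  have hpzww : ∀ w : E3, pd e3 (UU p) w = 0 := by
    rintro ⟨t,x,z⟩
    have h := hpz t x z
    rwa [Tzp t x z] at h
  -- slab facts
  have hu0 : ∀ t x z : ℝ, R ≤ |x| → UU u (t,x,z) = 0 := fun t x z hx => (hdecR t x z hx).1
  have hv0 : ∀ t x z : ℝ, R ≤ |x| → UU v (t,x,z) = 0 := fun t x z hx => (hdecR t x z hx).2.1
  have hp0 : ∀ t x z : ℝ, R ≤ |x| → UU p (t,x,z) = 0 := fun t x z hx => (hdecR t x z hx).2.2
  have huz0 : ∀ t x z : ℝ, R + 1 ≤ |x| → pd e3 (UU u) (t,x,z) = 0 := pd_zero_slab hu0 e3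
  have huzz0 : ∀ t x z : ℝ, R + 1 + 1 ≤ |x| → pd e3 (pd e3 (UU u)) (t,x,z) = 0 :=
    pd_zero_slab huz0 e3
  have hG0 : ∀ t x z : ℝ, R + 1 ≤ |x| → GG α u (t,x,z) = 0 := by
    intro t x z hx
    delta GG
    rw [hu0 t x z (by linarith), huz0 t x z hx]
    ring
  have hAA0 : ∀ t x z : ℝ, R ≤ |x| → AA α u p (t,x,z) = 0 := by
    intro t x z hx
    delta AA
    rw [hu0 t x z hx]
    ring
  have hBB0 : ∀ t x z : ℝ, R + 1 ≤ |x| → BB α u v p (t,x,z) = 0 := by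
    intro t x z hx
    delta BB
    rw [hu0 t x z (by linarith), hv0 t x z (by linarith), huz0 t x z hx]
    ring
  -- smoothness
  have cG : ContDiff ℝ (⊤ : ℕ∞) (GG α u) := by
    delta GG
    exact (contDiff_const.mul (hu'.mul hu')).add (contDiff_const.mul (cuz.mul cuz))
  have cAA : ContDiff ℝ (⊤ : ℕ∞) (AA α u p) := by
    delta AA
    exact (((contDiff_const.mul (hu'.mul (hu'.mul hu'))).sub
      (hu'.mul (hu'.mul cOm))).sub
      (contDiff_const.mul (hu'.mul (cuz.mul cuz)))).sub (hu'.mul hp')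
  have cBB : ContDiff ℝ (⊤ : ℕ∞) (BB α u v p) := by
    delta BB
    exact (((((((contDiff_const.mul (hu'.mul cuzt)).sub
      (hu'.mul (hv'.mul cOm))).add
      (contDiff_const.mul (hu'.mul (hu'.mul hv')))).sub
      (contDiff_const.mul (hv'.mul (cuz.mul cuz)))).add
      (hu'.mul cuz)).sub
      (contDiff_const.mul (hu'.mul cuzzz))).add
      (contDiff_const.mul (cuz.mul cuzz))).sub (hv'.mul hp')
  -- expansion of the time derivative of the energy density
  have hexp : pd e1 (GG α u) = fun w =>
      UU u w * pd e1 (UU u) w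
      + α ^ 2 * (pd e3 (UU u) w * pd e3 (pd e1 (UU u)) w) := by
    funext w
    delta GG
    rw [pd_add' e1 (by fun_prop) (by fun_prop),
      pd_const_mul' e1 _ (by fun_prop), pd_const_mul' e1 _ (by fun_prop),
      pd_mul' e1 du du, pd_mul' e1 duz duz]
    beta_reduce
    rw [pd_comm hu' e1 e3]
    ring
  -- key pointwise identity at time t
  have hkey : ∀ x z : ℝ, z ∈ Ioo (0:ℝ) 1 → pd e1 (GG α u) (t,x,z) =
      -((pd e3 (UU u) (t,x,z)) ^ 2 + α ^ 2 * (pd e3 (pd e3 (UU u)) (t,x,z)) ^ 2)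
      + pd e2 (AA α u p) (t,x,z) + pd e3 (BB α u v p) (t,x,z) := by
    intro x z hz
    rw [hexp]
    exact key_pointwise α u v p hu' hv' hp' (t,x,z) (hdivw _) (hpzww _) (hPDEw x z hz)
  -- integrabilities
  have hcomp : ∀ τ : ℝ, Continuous fun q : ℝ × ℝ => ((τ, q.1, q.2) : E3) :=
    fun τ => continuous_const.prodMk (continuous_fst.prodMk continuous_snd)
  have iU2 : ∀ τ : ℝ, Integrable (fun q : ℝ × ℝ => UU u (τ,q.1,q.2) * UU u (τ,q.1,q.2)) rho :=
    fun τ => integrable_slab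
      ((hu'.continuous.comp (hcomp τ)).mul (hu'.continuous.comp (hcomp τ)))
      (fun q hq => by rw [hu0 τ q.1 q.2 hq]; ring)
  have iUz2 : ∀ τ : ℝ, Integrable
      (fun q : ℝ × ℝ => pd e3 (UU u) (τ,q.1,q.2) * pd e3 (UU u) (τ,q.1,q.2)) rho :=
    fun τ => integrable_slab
      ((cuz.continuous.comp (hcomp τ)).mul (cuz.continuous.comp (hcomp τ)))
      (fun q hq => by rw [huz0 τ q.1 q.2 hq]; ring)
  have ia2 : Integrable (fun q : ℝ × ℝ => (pd e3 (UU u) (t,q.1,q.2)) ^ 2) rho :=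
    integrable_slab ((cuz.continuous.comp (hcomp t)).pow 2)
      (fun q hq => by rw [huz0 t q.1 q.2 hq]; ring)
  have ib2 : Integrable (fun q : ℝ × ℝ => (pd e3 (pd e3 (UU u)) (t,q.1,q.2)) ^ 2) rho :=
    integrable_slab ((cuzz.continuous.comp (hcomp t)).pow 2)
      (fun q hq => by rw [huzz0 t q.1 q.2 hq]; ring)
  have iAA : Integrable (fun q : ℝ × ℝ => pd e2 (AA α u p) (t,q.1,q.2)) rho :=
    integrable_slab ((pd_contDiff cAA e2).continuous.comp (hcomp t))
      (fun q hq => pd_zero_slab hAA0 e2 t q.1 q.2 hq)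
  have iBB : Integrable (fun q : ℝ × ℝ => pd e3 (BB α u v p) (t,q.1,q.2)) rho :=
    integrable_slab ((pd_contDiff cBB e3).continuous.comp (hcomp t))
      (fun q hq => pd_zero_slab hBB0 e3 t q.1 q.2 hq)
  have iSq : Integrable (fun q : ℝ × ℝ =>
      -((pd e3 (UU u) (t,q.1,q.2)) ^ 2 + α ^ 2 * (pd e3 (pd e3 (UU u)) (t,q.1,q.2)) ^ 2)) rho :=
    (ia2.add (ib2.const_mul _)).neg
  have hnull : rho {q : ℝ × ℝ | q.2 ∉ Ioo (0:ℝ) 1} = 0 := by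
    apply measure_mono_null _ rho_compl_null
    intro q hq; exact ⟨trivial, hq⟩
  -- boundary values of BB
  have hbBB : ∀ x : ℝ, BB α u v p (t,x,0) = 0 ∧ BB α u v p (t,x,1) = 0 := by
    intro x
    have hbu0 : UU u (t,x,0) = 0 := (hbc t x).1
    have hbu1 : UU u (t,x,1) = 0 := (hbc t x).2.1
    have hbv0 : UU v (t,x,0) = 0 := (hbc t x).2.2.1
    have hbv1 : UU v (t,x,1) = 0 := (hbc t x).2.2.2.1
    have hbz0 : pd e3 (UU u) (t,x,0) = 0 := by
      rw [← Tz t x 0]; exact (hbc t x).2.2.2.2.1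
    have hbz1 : pd e3 (UU u) (t,x,1) = 0 := by
      rw [← Tz t x 1]; exact (hbc t x).2.2.2.2.2
    constructor
    · delta BB; rw [hbu0, hbv0, hbz0]; ring
    · delta BB; rw [hbu1, hbv1, hbz1]; ring
  -- value of the derivative integral
  have hval : ∫ q, pd e1 (GG α u) (t,q.1,q.2) ∂rho
      = -((∫ q, (pd e3 (UU u) (t,q.1,q.2)) ^ 2 ∂rho)
        + α ^ 2 * ∫ q, (pd e3 (pd e3 (UU u)) (t,q.1,q.2)) ^ 2 ∂rho) := by
    have hae : (fun q : ℝ × ℝ => pd e1 (GG α u) (t,q.1,q.2)) =ᵐ[rho]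
        fun q : ℝ × ℝ =>
          -((pd e3 (UU u) (t,q.1,q.2)) ^ 2 + α ^ 2 * (pd e3 (pd e3 (UU u)) (t,q.1,q.2)) ^ 2)
          + pd e2 (AA α u p) (t,q.1,q.2) + pd e3 (BB α u v p) (t,q.1,q.2) := by
      filter_upwards [MeasureTheory.measure_eq_zero_iff_ae_notMem.mp hnull] with q hq
      exact hkey q.1 q.2 (by simpa using hq)
    have iSA : Integrable (fun q : ℝ × ℝ =>
        -((pd e3 (UU u) (t,q.1,q.2)) ^ 2 + α ^ 2 * (pd e3 (pd e3 (UU u)) (t,q.1,q.2)) ^ 2)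
        + pd e2 (AA α u p) (t,q.1,q.2)) rho := iSq.add iAA
    rw [integral_congr_ae hae, integral_add iSA iBB, integral_add iSq iAA,
      int_pd_e2_zero cAA hR0 hAA0 t, int_pd_e3_zero cBB hBB0 t hbBB,
      integral_neg, integral_add ia2 (ib2.const_mul _), integral_const_mul]
    ring
  -- representation of the energy as a product integral
  have hrep : ∀ τ : ℝ, (1/2) *
        ((∫ x : ℝ, ∫ z in Set.Ioo (0:ℝ) 1, (u τ x z) ^ 2) +
          α ^ 2 * ∫ x : ℝ, ∫ z in Set.Ioo (0:ℝ) 1, (deriv (fun z' => u τ x z') z) ^ 2)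
      = ∫ q, GG α u (τ,q.1,q.2) ∂rho := by
    intro τ
    have e1' : (∫ x : ℝ, ∫ z in Set.Ioo (0:ℝ) 1, (u τ x z) ^ 2)
        = ∫ q, UU u (τ,q.1,q.2) * UU u (τ,q.1,q.2) ∂rho := by
      rw [show (fun x => ∫ z in Set.Ioo (0:ℝ) 1, (u τ x z) ^ 2)
          = fun x => ∫ z in Set.Ioo (0:ℝ) 1, UU u (τ,x,z) * UU u (τ,x,z) from
        funext fun x => by congr 1; funext z; show (u τ x z)^2 = u τ x z * u τ x z; ring]
      exact MeasureTheory.integral_integral (f := fun x z => UU u (τ,x,z) * UU u (τ,x,z))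
        (μ := (volume : Measure ℝ)) (ν := (volume : Measure ℝ).restrict (Ioo 0 1)) (iU2 τ)
    have e2' : (∫ x : ℝ, ∫ z in Set.Ioo (0:ℝ) 1, (deriv (fun z' => u τ x z') z) ^ 2)
        = ∫ q, pd e3 (UU u) (τ,q.1,q.2) * pd e3 (UU u) (τ,q.1,q.2) ∂rho := by
      rw [show (fun x => ∫ z in Set.Ioo (0:ℝ) 1, (deriv (fun z' => u τ x z') z) ^ 2)
          = fun x => ∫ z in Set.Ioo (0:ℝ) 1, pd e3 (UU u) (τ,x,z) * pd e3 (UU u) (τ,x,z) from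
        funext fun x => by congr 1; funext z; rw [Tz τ x z]; ring]
      exact MeasureTheory.integral_integral
        (f := fun x z => pd e3 (UU u) (τ,x,z) * pd e3 (UU u) (τ,x,z))
        (μ := (volume : Measure ℝ)) (ν := (volume : Measure ℝ).restrict (Ioo 0 1)) (iUz2 τ)
    rw [e1', e2']
    have hsplit : ∫ q, GG α u (τ,q.1,q.2) ∂rho
        = 1/2 * (∫ q, UU u (τ,q.1,q.2) * UU u (τ,q.1,q.2) ∂rho)
          + α ^ 2 / 2 * (∫ q, pd e3 (UU u) (τ,q.1,q.2) * pd e3 (UU u) (τ,q.1,q.2) ∂rho) := by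
      rw [← integral_const_mul, ← integral_const_mul,
        ← integral_add ((iU2 τ).const_mul _) ((iUz2 τ).const_mul _)]
      rfl
    rw [hsplit]
    ring
  -- representation of the claimed derivative value
  have e2t : (∫ x : ℝ, ∫ z in Set.Ioo (0:ℝ) 1, (deriv (fun z' => u t x z') z) ^ 2)
      = ∫ q, (pd e3 (UU u) (t,q.1,q.2)) ^ 2 ∂rho := by
    rw [show (fun x => ∫ z in Set.Ioo (0:ℝ) 1, (deriv (fun z' => u t x z') z) ^ 2)
        = fun x => ∫ z in Set.Ioo (0:ℝ) 1, (pd e3 (UU u) (t,x,z)) ^ 2 from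
      funext fun x => by congr 1; funext z; rw [Tz t x z]]
    exact MeasureTheory.integral_integral (f := fun x z => (pd e3 (UU u) (t,x,z)) ^ 2)
      (μ := (volume : Measure ℝ)) (ν := (volume : Measure ℝ).restrict (Ioo 0 1)) ia2
  have e3t : (∫ x : ℝ, ∫ z in Set.Ioo (0:ℝ) 1, (deriv (deriv (fun z' => u t x z')) z) ^ 2)
      = ∫ q, (pd e3 (pd e3 (UU u)) (t,q.1,q.2)) ^ 2 ∂rho := by
    rw [show (fun x => ∫ z in Set.Ioo (0:ℝ) 1, (deriv (deriv (fun z' => u t x z')) z) ^ 2)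
        = fun x => ∫ z in Set.Ioo (0:ℝ) 1, (pd e3 (pd e3 (UU u)) (t,x,z)) ^ 2 from
      funext fun x => by congr 1; funext z; rw [Tzz t x z]]
    exact MeasureTheory.integral_integral (f := fun x z => (pd e3 (pd e3 (UU u)) (t,x,z)) ^ 2)
      (μ := (volume : Measure ℝ)) (ν := (volume : Measure ℝ).restrict (Ioo 0 1)) ib2
  have hfun := funext hrep
  rw [hfun, e2t, e3t, ← hval]
  exact hasDerivAt_int cG hG0 t
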